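/- arXiv:2212.10824 — 2 statements merged into one kernel-verified Lean document; each statement's English description precedes it below -/
import Mathlib

section
/- Let v_{ij}(x,y), (i,j) ∈ D, be the bivariate polynomials associated to a bivariate P-polynomial association scheme of type (α,β) on D ⊆ ℕ². Then for every (i,j) ∈ D with i ≥ 1 there exist real constants μ_{ij}^{mn} such that x·v_{i−1,j}(x,y) = Σ_{(m,n) ⪯_{(α,β)} (i,j)} μ_{ij}^{mn} v_{mn}(x,y), and for every (i,j) ∈ D with j ≥ 1 there exist real constants ν_{ij}^{mn} such that y·v_{i,j−1}(x,y) = Σ_{(m,n) ⪯_{(α,β)} (i,j)} ν_{ij}^{mn} v_{mn}(x,y). -/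
open Matrix Finset
open scoped Classical

noncomputable section

/-- Exponent vector of the monomial `x^m * y^n` in `MvPolynomial (Fin 2) ℝ`. -/
def mexp (m n : ℕ) : Fin 2 →₀ ℕ := Finsupp.single 0 m + Finsupp.single 1 n

/-- The partial order `⪯_{(α,β)}` on `ℕ × ℕ`. -/
def abLE (a b : ℝ) (p q : ℕ × ℕ) : Prop :=
  (p.1 : ℝ) + a * p.2 ≤ (q.1 : ℝ) + a * q.2 ∧
  b * p.1 + (p.2 : ℝ) ≤ b * q.1 + (q.2 : ℝ)

/-- An `(α,β)`-compatible bivariate polynomial of degree `(i,j)`. -/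
def CompatPoly (a b : ℝ) (ij : ℕ × ℕ) (v : MvPolynomial (Fin 2) ℝ) : Prop :=
  v.coeff (mexp ij.1 ij.2) ≠ 0 ∧
  ∀ m n : ℕ, v.coeff (mexp m n) ≠ 0 → abLE a b (m, n) ij

/-- An `(α,β)`-compatible subset of `ℕ × ℕ`. -/
def CompatSet (a b : ℝ) (D : Set (ℕ × ℕ)) : Prop :=
  ∀ p q : ℕ × ℕ, q ∈ D → abLE a b p q → p ∈ D

/-- Evaluation `v(M,N) = Σ c_{mn} M^m N^n` of a bivariate polynomial at two matrices. -/
def evalMat {V : Type*} [Fintype V] [DecidableEq V]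
    (v : MvPolynomial (Fin 2) ℝ) (M N : Matrix V V ℝ) : Matrix V V ℝ :=
  ∑ d ∈ v.support, v.coeff d • (M ^ d 0 * N ^ d 1)

/-- A symmetric association scheme whose adjacency matrices are labeled by a
finite subset `D` of `ℕ × ℕ`, with identity label `(0,0)` and given intersection numbers. -/
structure BivScheme (V : Type*) [Fintype V] [DecidableEq V] (D : Finset (ℕ × ℕ)) where
  A : ℕ × ℕ → Matrix V V ℝ
  mem00 : (0, 0) ∈ D
  nonzero : ∀ p ∈ D, A p ≠ 0
  entries : ∀ p ∈ D, ∀ x y, A p x y = 0 ∨ A p x y = 1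
  identity : A (0, 0) = 1
  sum_eq : ∑ p ∈ D, A p = Matrix.of fun _ _ => (1 : ℝ)
  symm : ∀ p ∈ D, (A p)ᵀ = A p
  inter : ℕ × ℕ → ℕ × ℕ → ℕ × ℕ → ℝ
  mul_eq : ∀ p ∈ D, ∀ q ∈ D, A p * A q = ∑ r ∈ D, inter p q r • A r
  comm : ∀ p ∈ D, ∀ q ∈ D, A p * A q = A q * A p

/-- Bivariate `P`-polynomial association scheme of type `(α,β)` on `D`
(with the given labeling). -/
def BivPPoly {V : Type*} [Fintype V] [DecidableEq V] {D : Finset (ℕ × ℕ)}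
    (S : BivScheme V D) (a b : ℝ) : Prop :=
  CompatSet a b ↑D ∧
  ∀ p ∈ D, ∃ v : MvPolynomial (Fin 2) ℝ, CompatPoly a b p v ∧
    S.A p = evalMat v (S.A (1, 0)) (S.A (0, 1))

lemma mexp_apply0 (m n : ℕ) : mexp m n 0 = m := by
  simp [mexp, Finsupp.single_apply]

lemma mexp_apply1 (m n : ℕ) : mexp m n 1 = n := by
  simp [mexp, Finsupp.single_apply]

lemma mexp_self (d : Fin 2 →₀ ℕ) : mexp (d 0) (d 1) = d := by
  ext i
  fin_cases i <;> simp [mexp, Finsupp.single_apply]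

lemma abLE_trans {a b : ℝ} {p q r : ℕ × ℕ} (h1 : abLE a b p q) (h2 : abLE a b q r) :
    abLE a b p r := ⟨le_trans h1.1 h2.1, le_trans h1.2 h2.2⟩

lemma abLE_antisymm' {a b : ℝ} (hab : a * b < 1) {p q : ℕ × ℕ} (h : abLE a b p q)
    (h2 : (1+b)*q.1 + (1+a)*q.2 ≤ (1+b)*p.1 + (1+a)*p.2) : p = q := by
  obtain ⟨h1, h2'⟩ := h
  have hx : (q.1 : ℝ) - p.1 + a * ((q.2 : ℝ) - p.2) = 0 := by nlinarith
  have hy : b * ((q.1 : ℝ) - p.1) + ((q.2 : ℝ) - p.2) = 0 := by nlinarith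
  have hy0 : ((q.2 : ℝ) - p.2) * (1 - a * b) = 0 := by linear_combination hy - b * hx
  have h2eq : (q.2 : ℝ) = p.2 := by
    rcases mul_eq_zero.mp hy0 with h | h
    · linarith
    · linarith
  have h1eq : (q.1 : ℝ) = p.1 := by linear_combination hx - a * h2eq
  have : p.1 = q.1 := by exact_mod_cast h1eq.symm
  have : p.2 = q.2 := by exact_mod_cast h2eq.symm
  exact Prod.ext (by omega) this

lemma expand (a b : ℝ) (hab : a * b < 1)
    (D : Finset (ℕ × ℕ)) (v : ℕ × ℕ → MvPolynomial (Fin 2) ℝ)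
    (hv : ∀ p ∈ D, CompatPoly a b p (v p)) :
    ∀ N : ℕ, ∀ T : Finset (ℕ × ℕ), T.card ≤ N → T ⊆ D →
      (∀ q ∈ T, ∀ q' : ℕ × ℕ, abLE a b q' q → q' ∈ T) →
      ∀ w : MvPolynomial (Fin 2) ℝ,
        (∀ m n : ℕ, w.coeff (mexp m n) ≠ 0 → (m, n) ∈ T) →
        ∃ c : ℕ × ℕ → ℝ, (∀ q, c q ≠ 0 → q ∈ T) ∧ w = ∑ q ∈ D, c q • v q := by
  intro N
  induction N with
  | zero =>
    intro T hcard _ _ w hw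
    have hT : T = ∅ := Finset.card_eq_zero.mp (Nat.le_zero.mp hcard)
    have hw0 : w = 0 := by
      apply MvPolynomial.eq_zero_iff.mpr
      intro d
      by_contra hd
      have := hw (d 0) (d 1) (by rwa [mexp_self])
      simp [hT] at this
    exact ⟨0, by simp, by simp [hw0]⟩
  | succ N ih =>
    intro T hcard hTD hdown w hw
    rcases T.eq_empty_or_nonempty with hT | hT
    · exact ih T (by simp [hT]) hTD hdown w hw
    obtain ⟨p, hpT, hpmax⟩ := T.exists_max_image (fun q => (1+b)*q.1 + (1+a)*q.2) hT
    have hpD := hTD hpT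
    obtain ⟨hlam, hcompat⟩ := hv p hpD
    set lam := (v p).coeff (mexp p.1 p.2) with hlamdef
    set t := w.coeff (mexp p.1 p.2) with htdef
    set r := w - (t/lam) • v p with hr
    have hT' : (T.erase p).card ≤ N := by
      have := Finset.card_erase_of_mem hpT
      have := Finset.card_pos.mpr hT
      omega
    have hdown' : ∀ q ∈ T.erase p, ∀ q' : ℕ × ℕ, abLE a b q' q → q' ∈ T.erase p := by
      intro q hq q' hle
      have hqT := Finset.mem_of_mem_erase hq
      refine Finset.mem_erase.mpr ⟨?_, hdown q hqT q' hle⟩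
      rintro rfl
      exact (Finset.ne_of_mem_erase hq) (abLE_antisymm' hab hle (hpmax q hqT)).symm
    have hrcond : ∀ m n : ℕ, r.coeff (mexp m n) ≠ 0 → (m, n) ∈ T.erase p := by
      intro m n hmn
      have hc : r.coeff (mexp m n)
          = w.coeff (mexp m n) - (t/lam) * (v p).coeff (mexp m n) := by
        simp [hr, MvPolynomial.coeff_sub, MvPolynomial.coeff_smul, smul_eq_mul]
      by_cases hmp : (m, n) = p
      · exfalso
        apply hmn
        have hm : m = p.1 := by rw [← hmp]
        have hn : n = p.2 := by rw [← hmp]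
        rw [hc, hm, hn, ← htdef, ← hlamdef]
        field_simp
        ring
      · refine Finset.mem_erase.mpr ⟨hmp, ?_⟩
        by_cases hwc : w.coeff (mexp m n) ≠ 0
        · exact hw m n hwc
        · push_neg at hwc
          have hvc : (v p).coeff (mexp m n) ≠ 0 := by
            intro h0
            apply hmn
            rw [hc, h0, hwc]
            ring
          exact hdown p hpT (m, n) (hcompat m n hvc)
    obtain ⟨c', hc's, hc'⟩ := ih (T.erase p) hT'
      (fun q hq => hTD (Finset.mem_of_mem_erase hq)) hdown' r hrcond
    refine ⟨fun q => c' q + if q = p then t/lam else 0, ?_, ?_⟩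
    · intro q hq
      by_cases h : q = p
      · subst h; exact hpT
      · simp only [h, if_false, add_zero] at hq
        exact Finset.mem_of_mem_erase (hc's q hq)
    · have hsplit : ∑ q ∈ D, (c' q + if q = p then t/lam else 0) • v q
          = (∑ q ∈ D, c' q • v q) + ∑ q ∈ D, (if q = p then t/lam else 0) • v q := by
        rw [← Finset.sum_add_distrib]
        exact Finset.sum_congr rfl fun q _ => add_smul _ _ _
      have h2 : ∑ q ∈ D, (if q = p then t/lam else 0) • v q = (t/lam) • v p := by
        simp only [ite_smul, zero_smul]
        rw [Finset.sum_ite_eq' D p (fun q => (t/lam) • v q)]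
        simp [hpD]
      rw [hsplit, ← hc', h2, hr]
      abel

/-- the polynomials of a bivariate P-polynomial association scheme satisfy
x·v_{i−1,j} = Σ_{(m,n) ⪯ (i,j)} μ v_{mn} and y·v_{i,j−1} = Σ_{(m,n) ⪯ (i,j)} ν v_{mn}. -/
theorem recurrences_of_bivariate_polynomials
    {V : Type*} [Fintype V] [DecidableEq V] {D : Finset (ℕ × ℕ)}
    (S : BivScheme V D) (a b : ℝ)
    (ha0 : 0 ≤ a) (ha1 : a ≤ 1) (hb0 : 0 ≤ b) (hb1 : b < 1)
    (h10 : (1, 0) ∈ D) (h01 : (0, 1) ∈ D)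
    (v : ℕ × ℕ → MvPolynomial (Fin 2) ℝ)
    (hD : CompatSet a b ↑D)
    (hv : ∀ p ∈ D, CompatPoly a b p (v p) ∧
      S.A p = evalMat (v p) (S.A (1, 0)) (S.A (0, 1))) :
    ∀ i j : ℕ, (i, j) ∈ D →
      (1 ≤ i → ∃ μ : ℕ × ℕ → ℝ,
        (∀ q ∈ D, ¬ abLE a b q (i, j) → μ q = 0) ∧
        MvPolynomial.X 0 * v (i - 1, j) = ∑ q ∈ D, μ q • v q) ∧
      (1 ≤ j → ∃ ν : ℕ × ℕ → ℝ,
        (∀ q ∈ D, ¬ abLE a b q (i, j) → ν q = 0) ∧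
        MvPolynomial.X 1 * v (i, j - 1) = ∑ q ∈ D, ν q • v q) := by
  have hab : a * b < 1 := by nlinarith
  intro i j hij
  have hDmem : ∀ q : ℕ × ℕ, abLE a b q (i, j) → q ∈ D := fun q hq =>
    Finset.mem_coe.mp (hD q (i, j) (Finset.mem_coe.mpr hij) hq)
  set T := D.filter (fun q => abLE a b q (i, j)) with hTdef
  have hTD : T ⊆ D := Finset.filter_subset _ _
  have hdown : ∀ q ∈ T, ∀ q' : ℕ × ℕ, abLE a b q' q → q' ∈ T := by
    intro q hq q' hle
    rw [Finset.mem_filter] at hq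
    have h2 := abLE_trans hle hq.2
    exact Finset.mem_filter.mpr ⟨hDmem q' h2, h2⟩
  constructor
  · intro hi1
    have hcast : ((i - 1 : ℕ) : ℝ) ≤ (i : ℝ) := Nat.cast_le.mpr (Nat.sub_le _ _)
    have hsub : abLE a b (i - 1, j) (i, j) := by
      constructor
      · show ((i - 1 : ℕ) : ℝ) + a * (j : ℝ) ≤ (i : ℝ) + a * j
        linarith
      · show b * ((i - 1 : ℕ) : ℝ) + (j : ℝ) ≤ b * (i : ℝ) + j
        nlinarith
    have hijD' : (i - 1, j) ∈ D := hDmem _ hsub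
    have hwcond : ∀ m n : ℕ,
        (MvPolynomial.X (0 : Fin 2) * v (i - 1, j)).coeff (mexp m n) ≠ 0 → (m, n) ∈ T := by
      intro m n hmn
      rw [MvPolynomial.coeff_X_mul'] at hmn
      by_cases h0 : (0 : Fin 2) ∈ (mexp m n).support
      swap
      · rw [if_neg h0] at hmn; exact absurd rfl hmn
      rw [if_pos h0] at hmn
      have hm1 : 1 ≤ m := by
        have := Finsupp.mem_support_iff.mp h0
        rw [mexp_apply0] at this; omega
      have hsubexp : mexp m n - Finsupp.single (0 : Fin 2) 1 = mexp (m - 1) n := by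
        ext k
        fin_cases k <;>
          simp [mexp, Finsupp.single_apply, Finsupp.tsub_apply]
      rw [hsubexp] at hmn
      have hle := ((hv _ hijD').1).2 (m - 1) n hmn
      have h1 : ((m - 1 : ℕ) : ℝ) + a * (n : ℝ) ≤ ((i - 1 : ℕ) : ℝ) + a * (j : ℝ) := hle.1
      have h2 : b * ((m - 1 : ℕ) : ℝ) + (n : ℝ) ≤ b * ((i - 1 : ℕ) : ℝ) + (j : ℝ) := hle.2
      rw [Nat.cast_sub hm1, Nat.cast_sub hi1] at h1 h2
      have hle2 : abLE a b (m, n) (i, j) := by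
        constructor
        · show (m : ℝ) + a * (n : ℝ) ≤ (i : ℝ) + a * j
          push_cast at h1 ⊢; linarith
        · show b * (m : ℝ) + (n : ℝ) ≤ b * (i : ℝ) + j
          push_cast at h2 ⊢; nlinarith
      exact Finset.mem_filter.mpr ⟨hDmem _ hle2, hle2⟩
    obtain ⟨c, hcs, hcw⟩ := expand a b hab D v (fun p hp => (hv p hp).1)
      T.card T le_rfl hTD hdown _ hwcond
    refine ⟨c, ?_, hcw⟩
    intro q hqD hq
    by_contra hc0
    exact hq (Finset.mem_filter.mp (hcs q hc0)).2
  · intro hj1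
    have hcast : ((j - 1 : ℕ) : ℝ) ≤ (j : ℝ) := Nat.cast_le.mpr (Nat.sub_le _ _)
    have hsub : abLE a b (i, j - 1) (i, j) := by
      constructor
      · show (i : ℝ) + a * ((j - 1 : ℕ) : ℝ) ≤ (i : ℝ) + a * j
        nlinarith
      · show b * (i : ℝ) + ((j - 1 : ℕ) : ℝ) ≤ b * (i : ℝ) + j
        linarith
    have hijD' : (i, j - 1) ∈ D := hDmem _ hsub
    have hwcond : ∀ m n : ℕ,
        (MvPolynomial.X (1 : Fin 2) * v (i, j - 1)).coeff (mexp m n) ≠ 0 → (m, n) ∈ T := by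
      intro m n hmn
      rw [MvPolynomial.coeff_X_mul'] at hmn
      by_cases h0 : (1 : Fin 2) ∈ (mexp m n).support
      swap
      · rw [if_neg h0] at hmn; exact absurd rfl hmn
      rw [if_pos h0] at hmn
      have hn1 : 1 ≤ n := by
        have := Finsupp.mem_support_iff.mp h0
        rw [mexp_apply1] at this; omega
      have hsubexp : mexp m n - Finsupp.single (1 : Fin 2) 1 = mexp m (n - 1) := by
        ext k
        fin_cases k <;>
          simp [mexp, Finsupp.single_apply, Finsupp.tsub_apply]
      rw [hsubexp] at hmn
      have hle := ((hv _ hijD').1).2 m (n - 1) hmn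
      have h1 : ((m : ℕ) : ℝ) + a * ((n - 1 : ℕ) : ℝ) ≤ ((i : ℕ) : ℝ) + a * ((j - 1 : ℕ) : ℝ) := hle.1
      have h2 : b * ((m : ℕ) : ℝ) + ((n - 1 : ℕ) : ℝ) ≤ b * ((i : ℕ) : ℝ) + ((j - 1 : ℕ) : ℝ) := hle.2
      rw [Nat.cast_sub hn1, Nat.cast_sub hj1] at h1 h2
      have hle2 : abLE a b (m, n) (i, j) := by
        constructor
        · show (m : ℝ) + a * (n : ℝ) ≤ (i : ℝ) + a * j
          push_cast at h1 ⊢; nlinarith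
        · show b * (m : ℝ) + (n : ℝ) ≤ b * (i : ℝ) + j
          push_cast at h2 ⊢; linarith
      exact Finset.mem_filter.mpr ⟨hDmem _ hle2, hle2⟩
    obtain ⟨c, hcs, hcw⟩ := expand a b hab D v (fun p hp => (hv p hp).1)
      T.card T le_rfl hTD hdown _ hwcond
    refine ⟨c, ?_, hcw⟩
    intro q hqD hq
    by_contra hc0
    exact hq (Finset.mem_filter.mp (hcs q hc0)).2
end
end

section
/- Let A_0, A_1, A_2 be a symmetric association scheme with two classes with parameters k, b, c > 0 such that A_1² = k A_0 + (k−1−b) A_1 + c A_2, A_1 A_2 = b A_1 + (k−c) A_2, and A_2² = (bk/c) A_0 + (bk/c − b) A_1 + (bk/c − 1 − k + c) A_2, and let A_{ij}, i+j ≤ N, be its symmetrization. Then for every i,j ≥ 0 with i+j ≤ N there exists a (1/2,1/2)-compatible bivariate real polynomial v_{ij}(x,y) of degree (i,j) such that A_{ij} = v_{ij}(A_{10}, A_{01}); in particular, the symmetrization is a bivariate P-polynomial association scheme of type (1/2,1/2) on the (1/2,1/2)-compatible domain D = {(i,j) ∈ ℕ² : i+j ≤ N}. -/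
open Matrix Finset
open scoped Classical

noncomputable section

/-- The symmetrization A_{ij} (indices in ℤ, zero matrix for out-of-range indices)
of a two-class association scheme: (A_{ij})_{x,y} = 1 iff exactly i coordinates s have
(A₁)_{x_s,y_s} = 1 and exactly j coordinates s have (A₂)_{x_s,y_s} = 1. -/
def symA {V : Type*} [Fintype V] [DecidableEq V] (A₁ A₂ : Matrix V V ℝ) (N : ℕ)
    (i j : ℤ) : Matrix (Fin N → V) (Fin N → V) ℝ :=
  Matrix.of fun x y =>
    if ((Finset.univ.filter fun s => A₁ (x s) (y s) = 1).card : ℤ) = i ∧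
       ((Finset.univ.filter fun s => A₂ (x s) (y s) = 1).card : ℤ) = j
    then 1 else 0


section Aux

lemma eq_mexp (d : Fin 2 →₀ ℕ) : d = mexp (d 0) (d 1) := by
  ext i; fin_cases i <;> simp [mexp]

lemma mexp_add_single0 (m n : ℕ) : mexp m n + Finsupp.single 0 1 = mexp (m+1) n := by
  ext i; fin_cases i <;> simp [mexp]
lemma mexp_add_single1 (m n : ℕ) : mexp m n + Finsupp.single 1 1 = mexp m (n+1) := by
  ext i; fin_cases i <;> simp [mexp]

lemma coeff_mul_X0 (v : MvPolynomial (Fin 2) ℝ) (m n : ℕ) :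
    (v * MvPolynomial.X 0).coeff (mexp m n) =
      if m = 0 then 0 else v.coeff (mexp (m-1) n) := by
  rw [MvPolynomial.coeff_mul_X']
  rcases Nat.eq_zero_or_pos m with hm | hm
  · simp [hm, Finsupp.mem_support_iff, mexp_apply0]
  · have h0 : (0 : Fin 2) ∈ (mexp m n).support := by
      simp [Finsupp.mem_support_iff, mexp_apply0]; omega
    rw [if_pos h0, if_neg (by omega)]
    congr 1
    ext i; fin_cases i <;> simp [mexp, Finsupp.tsub_apply] <;> omega

lemma coeff_mul_X1 (v : MvPolynomial (Fin 2) ℝ) (m n : ℕ) :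
    (v * MvPolynomial.X 1).coeff (mexp m n) =
      if n = 0 then 0 else v.coeff (mexp m (n-1)) := by
  rw [MvPolynomial.coeff_mul_X']
  rcases Nat.eq_zero_or_pos n with hn | hn
  · simp [hn, Finsupp.mem_support_iff, mexp_apply1]
  · have h0 : (1 : Fin 2) ∈ (mexp m n).support := by
      simp [Finsupp.mem_support_iff, mexp_apply1]; omega
    rw [if_pos h0, if_neg (by omega)]
    congr 1
    ext i; fin_cases i <;> simp [mexp, Finsupp.tsub_apply] <;> omega

variable {V : Type*} [Fintype V] [DecidableEq V]

lemma evalMat_eq_sum_subset (v : MvPolynomial (Fin 2) ℝ) (M N : Matrix V V ℝ)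
    (S : Finset (Fin 2 →₀ ℕ)) (hS : v.support ⊆ S) :
    evalMat v M N = ∑ d ∈ S, v.coeff d • (M ^ d 0 * N ^ d 1) := by
  rw [evalMat, Finset.sum_subset hS]
  intro d _ hd
  simp [MvPolynomial.notMem_support_iff.mp hd]

lemma evalMat_add (u v : MvPolynomial (Fin 2) ℝ) (M N : Matrix V V ℝ) :
    evalMat (u + v) M N = evalMat u M N + evalMat v M N := by
  rw [evalMat_eq_sum_subset (u+v) M N (u.support ∪ v.support) (MvPolynomial.support_add),
    evalMat_eq_sum_subset u M N (u.support ∪ v.support) subset_union_left,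
    evalMat_eq_sum_subset v M N (u.support ∪ v.support) subset_union_right,
    ← Finset.sum_add_distrib]
  refine Finset.sum_congr rfl fun d _ => ?_
  rw [MvPolynomial.coeff_add, add_smul]

lemma evalMat_zero (M N : Matrix V V ℝ) : evalMat 0 M N = 0 := by simp [evalMat]

lemma evalMat_smul (r : ℝ) (v : MvPolynomial (Fin 2) ℝ) (M N : Matrix V V ℝ) :
    evalMat (r • v) M N = r • evalMat v M N := by
  rw [evalMat_eq_sum_subset (r • v) M N v.support (MvPolynomial.support_smul),
    evalMat, Finset.smul_sum]
  refine Finset.sum_congr rfl fun d _ => ?_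
  rw [MvPolynomial.coeff_smul, smul_eq_mul, mul_smul]

lemma evalMat_sub (u v : MvPolynomial (Fin 2) ℝ) (M N : Matrix V V ℝ) :
    evalMat (u - v) M N = evalMat u M N - evalMat v M N := by
  rw [sub_eq_add_neg, evalMat_add, ← neg_one_smul ℝ v, evalMat_smul, neg_one_smul,
    ← sub_eq_add_neg]

lemma evalMat_sum {ι : Type*} (s : Finset ι) (f : ι → MvPolynomial (Fin 2) ℝ)
    (M N : Matrix V V ℝ) :
    evalMat (∑ i ∈ s, f i) M N = ∑ i ∈ s, evalMat (f i) M N := by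
  induction s using Finset.induction_on with
  | empty => simp [evalMat_zero]
  | @insert a s h ih => rw [Finset.sum_insert h, Finset.sum_insert h, evalMat_add, ih]

lemma evalMat_monomial (d : Fin 2 →₀ ℕ) (r : ℝ) (M N : Matrix V V ℝ) :
    evalMat (MvPolynomial.monomial d r) M N = r • (M ^ d 0 * N ^ d 1) := by
  rcases eq_or_ne r 0 with h | h
  · simp [h, evalMat_zero]
  · rw [evalMat, MvPolynomial.support_monomial, if_neg h, Finset.sum_singleton,
      MvPolynomial.coeff_monomial, if_pos rfl]

lemma evalMat_mul_X0 (v : MvPolynomial (Fin 2) ℝ) (M N : Matrix V V ℝ) :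
    evalMat (v * MvPolynomial.X 0) M N = M * evalMat v M N := by
  conv_lhs => rw [v.as_sum]
  rw [Finset.sum_mul]
  have : ∀ d ∈ v.support, (MvPolynomial.monomial d (v.coeff d)) * MvPolynomial.X 0
      = MvPolynomial.monomial (d + Finsupp.single 0 1) (v.coeff d) := by
    intro d _
    rw [MvPolynomial.X, MvPolynomial.monomial_mul, mul_one]
  rw [Finset.sum_congr rfl this, evalMat_sum, evalMat, Matrix.mul_sum]
  refine Finset.sum_congr rfl fun d _ => ?_
  rw [evalMat_monomial, mul_smul_comm]
  congr 1
  have h0 : (d + Finsupp.single 0 1 : Fin 2 →₀ ℕ) 0 = d 0 + 1 := by simp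
  have h1 : (d + Finsupp.single 0 1 : Fin 2 →₀ ℕ) 1 = d 1 := by simp
  rw [h0, h1, pow_succ', mul_assoc]

lemma evalMat_mul_X1 (v : MvPolynomial (Fin 2) ℝ) (M N : Matrix V V ℝ) :
    evalMat (v * MvPolynomial.X 1) M N = evalMat v M N * N := by
  conv_lhs => rw [v.as_sum]
  rw [Finset.sum_mul]
  have : ∀ d ∈ v.support, (MvPolynomial.monomial d (v.coeff d)) * MvPolynomial.X 1
      = MvPolynomial.monomial (d + Finsupp.single 1 1) (v.coeff d) := by
    intro d _
    rw [MvPolynomial.X, MvPolynomial.monomial_mul, mul_one]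
  rw [Finset.sum_congr rfl this, evalMat_sum, evalMat, Matrix.sum_mul]
  refine Finset.sum_congr rfl fun d _ => ?_
  rw [evalMat_monomial, smul_mul_assoc]
  congr 1
  have h0 : (d + Finsupp.single 1 1 : Fin 2 →₀ ℕ) 0 = d 0 := by simp
  have h1 : (d + Finsupp.single 1 1 : Fin 2 →₀ ℕ) 1 = d 1 + 1 := by simp
  rw [h0, h1, pow_succ, ← mul_assoc]


/-- indicator of target profile -/
def chi (i j a b : ℤ) : ℝ := if a = i ∧ b = j then 1 else 0

lemma card_filter_update_aux {ι : Type*} [Fintype ι] [DecidableEq ι]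
    (P P' : ι → Prop) [DecidablePred P] [DecidablePred P'] (s : ι)
    (h : ∀ t, t ≠ s → (P' t ↔ P t)) :
    (univ.filter P').card + (if P s then 1 else 0)
      = (univ.filter P).card + (if P' s then 1 else 0) := by
  have key : ∀ (Q : ι → Prop) (_ : DecidablePred Q),
      (univ.filter Q).card
        = ∑ t ∈ univ.erase s, (if Q t then 1 else 0) + (if Q s then 1 else 0) := by
    intro Q _
    rw [Finset.card_filter, ← Finset.sum_erase_add univ _ (Finset.mem_univ s)]
  rw [key P' inferInstance, key P inferInstance]
  have hs : ∑ t ∈ univ.erase s, (if P' t then 1 else 0)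
      = ∑ t ∈ univ.erase s, (if P t then 1 else 0) :=
    Finset.sum_congr rfl fun t ht => if_congr (h t (Finset.mem_erase.mp ht).1) rfl rfl
  omega

variable {V : Type*} [Fintype V] [DecidableEq V]

lemma mul_symA_entry {A₁ A₂ : Matrix V V ℝ}
    (htri : ∀ u v : V, (u = v ∧ A₁ u v = 0 ∧ A₂ u v = 0) ∨
      (u ≠ v ∧ A₁ u v = 1 ∧ A₂ u v = 0) ∨ (u ≠ v ∧ A₁ u v = 0 ∧ A₂ u v = 1))
    (B : Matrix V V ℝ) (hB01 : ∀ u v, B u v = 0 ∨ B u v = 1) (hBdiag : ∀ u, B u u = 0)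
    {N : ℕ} (i j : ℤ)
    (L : Matrix (Fin N → V) (Fin N → V) ℝ)
    (hL : ∀ x z, L x z =
      if ∃ s, B (x s) (z s) = 1 ∧ ∀ t, t ≠ s → z t = x t then 1 else 0)
    (x y : Fin N → V) :
    (L * symA A₁ A₂ N i j) x y =
      ∑ s : Fin N,
        (B (x s) (y s) *
            chi i j
              (((univ.filter fun t => A₁ (x t) (y t) = 1).card : ℤ)
                - (if A₁ (x s) (y s) = 1 then 1 else 0))
              (((univ.filter fun t => A₂ (x t) (y t) = 1).card : ℤ)
                - (if A₂ (x s) (y s) = 1 then 1 else 0))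
         + (B * A₁) (x s) (y s) *
            chi i j
              (((univ.filter fun t => A₁ (x t) (y t) = 1).card : ℤ)
                - (if A₁ (x s) (y s) = 1 then 1 else 0) + 1)
              (((univ.filter fun t => A₂ (x t) (y t) = 1).card : ℤ)
                - (if A₂ (x s) (y s) = 1 then 1 else 0))
         + (B * A₂) (x s) (y s) *
            chi i j
              (((univ.filter fun t => A₁ (x t) (y t) = 1).card : ℤ)
                - (if A₁ (x s) (y s) = 1 then 1 else 0))
              (((univ.filter fun t => A₂ (x t) (y t) = 1).card : ℤ)
                - (if A₂ (x s) (y s) = 1 then 1 else 0) + 1)) := by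
  rw [Matrix.mul_apply]
  have hstep1 : ∀ z, L x z * symA A₁ A₂ N i j z y =
      if ∃ s, B (x s) (z s) = 1 ∧ ∀ t, t ≠ s → z t = x t
      then symA A₁ A₂ N i j z y else 0 := by
    intro z; rw [hL, ite_mul, one_mul, zero_mul]
  rw [Finset.sum_congr rfl fun z _ => hstep1 z, ← Finset.sum_filter]
  have hbij : ∑ z ∈ univ.filter (fun z => ∃ s, B (x s) (z s) = 1 ∧ ∀ t, t ≠ s → z t = x t),
        symA A₁ A₂ N i j z y
      = ∑ p ∈ (univ : Finset (Fin N)).sigma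
          (fun s => univ.filter fun w : V => B (x s) w = 1),
          symA A₁ A₂ N i j (Function.update x p.1 p.2) y := by
    refine (Finset.sum_bij (fun p _ => Function.update x p.1 p.2) ?_ ?_ ?_ ?_).symm
    · rintro ⟨s, w⟩ hp
      simp only [Finset.mem_sigma, Finset.mem_filter, Finset.mem_univ, true_and] at hp
      simp only [Finset.mem_filter, Finset.mem_univ, true_and]
      exact ⟨s, by simpa using hp, fun t ht => Function.update_of_ne ht _ _⟩
    · rintro ⟨s, w⟩ hp ⟨s', w'⟩ hp' heq
      simp only [Finset.mem_sigma, Finset.mem_filter, Finset.mem_univ, true_and] at hp hp'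
      have heq' : Function.update x s w = Function.update x s' w' := heq
      by_cases hss : s = s'
      · subst hss
        have hw : w = w' := by
          have := congrFun heq' s
          rwa [Function.update_self, Function.update_self] at this
        simp [hw]
      · exfalso
        have h1 := congrFun heq' s
        rw [Function.update_self] at h1
        rw [Function.update_of_ne hss] at h1
        rw [h1, hBdiag] at hp
        norm_num at hp
    · intro z hz
      simp only [Finset.mem_filter, Finset.mem_univ, true_and] at hz
      obtain ⟨s, hBs, hoth⟩ := hz
      refine ⟨⟨s, z s⟩, ?_, ?_⟩
      · simp only [Finset.mem_sigma, Finset.mem_filter, Finset.mem_univ, true_and]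
        exact hBs
      · show Function.update x s (z s) = z
        funext t
        by_cases ht : t = s
        · subst ht; rw [Function.update_self]
        · rw [Function.update_of_ne ht]; exact (hoth t ht).symm
    · intros; rfl
  rw [hbij, Finset.sum_sigma]
  refine Finset.sum_congr rfl fun s _ => ?_
  have hcnt1 : ∀ w : V,
      (((univ.filter fun t => A₁ (Function.update x s w t) (y t) = 1).card : ℤ))
        = ((univ.filter fun t => A₁ (x t) (y t) = 1).card : ℤ)
          - (if A₁ (x s) (y s) = 1 then 1 else 0)
          + (if A₁ w (y s) = 1 then 1 else 0) := by
    intro w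
    have hkey := card_filter_update_aux (fun t => A₁ (x t) (y t) = 1)
      (fun t => A₁ (Function.update x s w t) (y t) = 1) s
      (fun t ht => by
        show A₁ (Function.update x s w t) (y t) = 1 ↔ A₁ (x t) (y t) = 1
        rw [Function.update_of_ne ht])
    have hs' : A₁ (Function.update x s w s) (y s) = A₁ w (y s) := by
      rw [Function.update_self]
    simp only [hs'] at hkey
    by_cases h1 : A₁ (x s) (y s) = 1 <;> by_cases h2 : A₁ w (y s) = 1 <;>
      simp only [h1, h2, if_true, if_false, if_pos, if_neg, not_false_iff] at hkey ⊢ <;>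
      omega
  have hcnt2 : ∀ w : V,
      (((univ.filter fun t => A₂ (Function.update x s w t) (y t) = 1).card : ℤ))
        = ((univ.filter fun t => A₂ (x t) (y t) = 1).card : ℤ)
          - (if A₂ (x s) (y s) = 1 then 1 else 0)
          + (if A₂ w (y s) = 1 then 1 else 0) := by
    intro w
    have hkey := card_filter_update_aux (fun t => A₂ (x t) (y t) = 1)
      (fun t => A₂ (Function.update x s w t) (y t) = 1) s
      (fun t ht => by
        show A₂ (Function.update x s w t) (y t) = 1 ↔ A₂ (x t) (y t) = 1
        rw [Function.update_of_ne ht])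
    have hs' : A₂ (Function.update x s w s) (y s) = A₂ w (y s) := by
      rw [Function.update_self]
    simp only [hs'] at hkey
    by_cases h1 : A₂ (x s) (y s) = 1 <;> by_cases h2 : A₂ w (y s) = 1 <;>
      simp only [h1, h2, if_true, if_false, if_pos, if_neg, not_false_iff] at hkey ⊢ <;>
      omega
  have hpt : ∀ w ∈ univ.filter (fun w : V => B (x s) w = 1),
      symA A₁ A₂ N i j (Function.update x s w) y =
        (if w = y s then (1:ℝ) else 0) *
          chi i j
            (((univ.filter fun t => A₁ (x t) (y t) = 1).card : ℤ)
              - (if A₁ (x s) (y s) = 1 then 1 else 0))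
            (((univ.filter fun t => A₂ (x t) (y t) = 1).card : ℤ)
              - (if A₂ (x s) (y s) = 1 then 1 else 0))
        + A₁ w (y s) *
          chi i j
            (((univ.filter fun t => A₁ (x t) (y t) = 1).card : ℤ)
              - (if A₁ (x s) (y s) = 1 then 1 else 0) + 1)
            (((univ.filter fun t => A₂ (x t) (y t) = 1).card : ℤ)
              - (if A₂ (x s) (y s) = 1 then 1 else 0))
        + A₂ w (y s) *
          chi i j
            (((univ.filter fun t => A₁ (x t) (y t) = 1).card : ℤ)
              - (if A₁ (x s) (y s) = 1 then 1 else 0))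
            (((univ.filter fun t => A₂ (x t) (y t) = 1).card : ℤ)
              - (if A₂ (x s) (y s) = 1 then 1 else 0) + 1) := by
    intro w _
    show (if _ ∧ _ then (1:ℝ) else 0) = _
    rw [hcnt1 w, hcnt2 w]
    rcases htri w (y s) with ⟨hw, h1, h2⟩ | ⟨hw, h1, h2⟩ | ⟨hw, h1, h2⟩
    · rw [h1, h2, if_pos hw]
      simp only [chi]
      norm_num
    · rw [h1, h2, if_neg hw]
      simp only [chi]
      norm_num
    · rw [h1, h2, if_neg hw]
      simp only [chi]
      norm_num
  rw [Finset.sum_congr rfl hpt, Finset.sum_add_distrib, Finset.sum_add_distrib]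
  congr 1
  · congr 1
    · rw [← Finset.sum_mul]
      congr 1
      rw [Finset.sum_ite_eq' (univ.filter fun w : V => B (x s) w = 1) (y s) (fun _ => (1:ℝ))]
      rcases hB01 (x s) (y s) with h | h <;> simp [Finset.mem_filter, h]
    · rw [← Finset.sum_mul]
      congr 1
      rw [Matrix.mul_apply, Finset.sum_filter]
      refine Finset.sum_congr rfl fun w _ => ?_
      rcases hB01 (x s) w with h | h <;> simp [h]
  · rw [← Finset.sum_mul]
    congr 1
    rw [Matrix.mul_apply, Finset.sum_filter]
    refine Finset.sum_congr rfl fun w _ => ?_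
    rcases hB01 (x s) w with h | h <;> simp [h]

lemma mul_symA_entry' {A₁ A₂ : Matrix V V ℝ}
    (htri : ∀ u v : V, (u = v ∧ A₁ u v = 0 ∧ A₂ u v = 0) ∨
      (u ≠ v ∧ A₁ u v = 1 ∧ A₂ u v = 0) ∨ (u ≠ v ∧ A₁ u v = 0 ∧ A₂ u v = 1))
    (B : Matrix V V ℝ) (hB01 : ∀ u v, B u v = 0 ∨ B u v = 1) (hBdiag : ∀ u, B u u = 0)
    (q1 q2 p10 p11 p12 p20 p21 p22 : ℝ)
    (hBcomb : B = q1 • A₁ + q2 • A₂)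
    (hBA₁ : B * A₁ = p10 • (1 : Matrix V V ℝ) + p11 • A₁ + p12 • A₂)
    (hBA₂ : B * A₂ = p20 • (1 : Matrix V V ℝ) + p21 • A₁ + p22 • A₂)
    {N : ℕ} (i j : ℤ)
    (L : Matrix (Fin N → V) (Fin N → V) ℝ)
    (hL : ∀ x z, L x z =
      if ∃ s, B (x s) (z s) = 1 ∧ ∀ t, t ≠ s → z t = x t then 1 else 0)
    (x y : Fin N → V) :
    (L * symA A₁ A₂ N i j) x y =
      ((N : ℝ) - ((((univ.filter fun t => A₁ (x t) (y t) = 1).card : ℤ) : ℝ))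
          - ((((univ.filter fun t => A₂ (x t) (y t) = 1).card : ℤ) : ℝ))) *
        (p10 * chi i j (((univ.filter fun t => A₁ (x t) (y t) = 1).card : ℤ) + 1)
            ((univ.filter fun t => A₂ (x t) (y t) = 1).card : ℤ)
         + p20 * chi i j ((univ.filter fun t => A₁ (x t) (y t) = 1).card : ℤ)
            (((univ.filter fun t => A₂ (x t) (y t) = 1).card : ℤ) + 1))
      + ((((univ.filter fun t => A₁ (x t) (y t) = 1).card : ℤ) : ℝ)) *
        (q1 * chi i j (((univ.filter fun t => A₁ (x t) (y t) = 1).card : ℤ) - 1)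
            ((univ.filter fun t => A₂ (x t) (y t) = 1).card : ℤ)
         + p11 * chi i j ((univ.filter fun t => A₁ (x t) (y t) = 1).card : ℤ)
            ((univ.filter fun t => A₂ (x t) (y t) = 1).card : ℤ)
         + p21 * chi i j (((univ.filter fun t => A₁ (x t) (y t) = 1).card : ℤ) - 1)
            (((univ.filter fun t => A₂ (x t) (y t) = 1).card : ℤ) + 1))
      + ((((univ.filter fun t => A₂ (x t) (y t) = 1).card : ℤ) : ℝ)) *
        (q2 * chi i j ((univ.filter fun t => A₁ (x t) (y t) = 1).card : ℤ)
            (((univ.filter fun t => A₂ (x t) (y t) = 1).card : ℤ) - 1)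
         + p12 * chi i j (((univ.filter fun t => A₁ (x t) (y t) = 1).card : ℤ) + 1)
            (((univ.filter fun t => A₂ (x t) (y t) = 1).card : ℤ) - 1)
         + p22 * chi i j ((univ.filter fun t => A₁ (x t) (y t) = 1).card : ℤ)
            ((univ.filter fun t => A₂ (x t) (y t) = 1).card : ℤ)) := by
  have hA₁diag : ∀ u : V, A₁ u u = 0 := by
    intro u
    rcases htri u u with ⟨_, h, _⟩ | ⟨h, _⟩ | ⟨h, _⟩ <;> first | exact h | exact absurd rfl h
  have hA₂diag : ∀ u : V, A₂ u u = 0 := by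
    intro u
    rcases htri u u with ⟨_, _, h⟩ | ⟨h, _⟩ | ⟨h, _⟩ <;> first | exact h | exact absurd rfl h
  rw [mul_symA_entry htri B hB01 hBdiag i j L hL x y]
  set Z1 : ℤ := ((univ.filter fun t => A₁ (x t) (y t) = 1).card : ℤ) with hZ1
  set Z2 : ℤ := ((univ.filter fun t => A₂ (x t) (y t) = 1).card : ℤ) with hZ2
  have hpt : ∀ s : Fin N,
      (B (x s) (y s) * chi i j (Z1 - (if A₁ (x s) (y s) = 1 then 1 else 0))
          (Z2 - (if A₂ (x s) (y s) = 1 then 1 else 0))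
       + (B * A₁) (x s) (y s) * chi i j (Z1 - (if A₁ (x s) (y s) = 1 then 1 else 0) + 1)
          (Z2 - (if A₂ (x s) (y s) = 1 then 1 else 0))
       + (B * A₂) (x s) (y s) * chi i j (Z1 - (if A₁ (x s) (y s) = 1 then 1 else 0))
          (Z2 - (if A₂ (x s) (y s) = 1 then 1 else 0) + 1))
      = (if x s = y s then (1:ℝ) else 0) *
          (p10 * chi i j (Z1 + 1) Z2 + p20 * chi i j Z1 (Z2 + 1))
        + A₁ (x s) (y s) *
          (q1 * chi i j (Z1 - 1) Z2 + p11 * chi i j Z1 Z2 + p21 * chi i j (Z1 - 1) (Z2 + 1))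
        + A₂ (x s) (y s) *
          (q2 * chi i j Z1 (Z2 - 1) + p12 * chi i j (Z1 + 1) (Z2 - 1)
            + p22 * chi i j Z1 Z2) := by
    intro s
    have hBe : B (x s) (y s) = q1 * A₁ (x s) (y s) + q2 * A₂ (x s) (y s) := by
      rw [hBcomb]; simp [Matrix.add_apply, Matrix.smul_apply, smul_eq_mul]
    have hBA₁e : (B * A₁) (x s) (y s) =
        p10 * (if x s = y s then (1:ℝ) else 0) + p11 * A₁ (x s) (y s) + p12 * A₂ (x s) (y s) := by
      rw [hBA₁]; simp [Matrix.add_apply, Matrix.smul_apply, smul_eq_mul, Matrix.one_apply]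
    have hBA₂e : (B * A₂) (x s) (y s) =
        p20 * (if x s = y s then (1:ℝ) else 0) + p21 * A₁ (x s) (y s) + p22 * A₂ (x s) (y s) := by
      rw [hBA₂]; simp [Matrix.add_apply, Matrix.smul_apply, smul_eq_mul, Matrix.one_apply]
    rcases htri (x s) (y s) with ⟨hw, h1, h2⟩ | ⟨hw, h1, h2⟩ | ⟨hw, h1, h2⟩
    · rw [hBe, hBA₁e, hBA₂e, h1, h2, if_pos hw]
      have e1 : Z1 - (if (0:ℝ) = 1 then (1:ℤ) else 0) = Z1 := by norm_num
      have e2 : Z2 - (if (0:ℝ) = 1 then (1:ℤ) else 0) = Z2 := by norm_num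
      rw [e1, e2]; ring
    · rw [hBe, hBA₁e, hBA₂e, h1, h2, if_neg hw]
      have e1 : Z1 - (if (1:ℝ) = 1 then (1:ℤ) else 0) = Z1 - 1 := by norm_num
      have e2 : Z2 - (if (0:ℝ) = 1 then (1:ℤ) else 0) = Z2 := by norm_num
      have e3 : Z1 - 1 + 1 = Z1 := by ring
      rw [e1, e2, e3]; ring
    · rw [hBe, hBA₁e, hBA₂e, h1, h2, if_neg hw]
      have e1 : Z1 - (if (0:ℝ) = 1 then (1:ℤ) else 0) = Z1 := by norm_num
      have e2 : Z2 - (if (1:ℝ) = 1 then (1:ℤ) else 0) = Z2 - 1 := by norm_num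
      have e3 : Z2 - 1 + 1 = Z2 := by ring
      rw [e1, e2, e3]; ring
  rw [Finset.sum_congr rfl fun s _ => hpt s]
  rw [Finset.sum_add_distrib, Finset.sum_add_distrib, ← Finset.sum_mul, ← Finset.sum_mul,
    ← Finset.sum_mul]
  have hsum1 : ∑ s : Fin N, A₁ (x s) (y s) = ((Z1 : ℝ)) := by
    rw [hZ1]
    push_cast
    rw [Finset.card_filter]
    push_cast
    refine Finset.sum_congr rfl fun s _ => ?_
    rcases htri (x s) (y s) with ⟨_, h, _⟩ | ⟨_, h, _⟩ | ⟨_, h, _⟩ <;> simp [h]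
  have hsum2 : ∑ s : Fin N, A₂ (x s) (y s) = ((Z2 : ℝ)) := by
    rw [hZ2]
    push_cast
    rw [Finset.card_filter]
    push_cast
    refine Finset.sum_congr rfl fun s _ => ?_
    rcases htri (x s) (y s) with ⟨_, _, h⟩ | ⟨_, _, h⟩ | ⟨_, _, h⟩ <;> simp [h]
  have hsum0 : ∑ s : Fin N, (if x s = y s then (1:ℝ) else 0)
      = (N : ℝ) - (Z1 : ℝ) - (Z2 : ℝ) := by
    have hptw : ∀ s : Fin N, (if x s = y s then (1:ℝ) else 0)
        = 1 - A₁ (x s) (y s) - A₂ (x s) (y s) := by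
      intro s
      rcases htri (x s) (y s) with ⟨hw, h1, h2⟩ | ⟨hw, h1, h2⟩ | ⟨hw, h1, h2⟩ <;>
        rw [h1, h2] <;> simp [hw] <;> norm_num
    rw [Finset.sum_congr rfl fun s _ => hptw s]
    rw [Finset.sum_sub_distrib, Finset.sum_sub_distrib, hsum1, hsum2]
    simp
  rw [hsum0, hsum1, hsum2]

set_option maxHeartbeats 1600000 in
lemma gen_recursion {A₁ A₂ : Matrix V V ℝ}
    (htri : ∀ u v : V, (u = v ∧ A₁ u v = 0 ∧ A₂ u v = 0) ∨
      (u ≠ v ∧ A₁ u v = 1 ∧ A₂ u v = 0) ∨ (u ≠ v ∧ A₁ u v = 0 ∧ A₂ u v = 1))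
    (B : Matrix V V ℝ) (hB01 : ∀ u v, B u v = 0 ∨ B u v = 1) (hBdiag : ∀ u, B u u = 0)
    (q1 q2 p10 p11 p12 p20 p21 p22 : ℝ)
    (hBcomb : B = q1 • A₁ + q2 • A₂)
    (hBA₁ : B * A₁ = p10 • (1 : Matrix V V ℝ) + p11 • A₁ + p12 • A₂)
    (hBA₂ : B * A₂ = p20 • (1 : Matrix V V ℝ) + p21 • A₁ + p22 • A₂)
    {N : ℕ} (i j : ℤ)
    (L : Matrix (Fin N → V) (Fin N → V) ℝ)
    (hL : ∀ x z, L x z =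
      if ∃ s, B (x s) (z s) = 1 ∧ ∀ t, t ≠ s → z t = x t then 1 else 0) :
    L * symA A₁ A₂ N i j =
      (q1 * ((i:ℝ)+1)) • symA A₁ A₂ N (i+1) j
      + (q2 * ((j:ℝ)+1)) • symA A₁ A₂ N i (j+1)
      + (p10 * ((N:ℝ)-(i:ℝ)-(j:ℝ)+1)) • symA A₁ A₂ N (i-1) j
      + (p20 * ((N:ℝ)-(i:ℝ)-(j:ℝ)+1)) • symA A₁ A₂ N i (j-1)
      + (p11 * (i:ℝ) + p22 * (j:ℝ)) • symA A₁ A₂ N i j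
      + (p21 * ((i:ℝ)+1)) • symA A₁ A₂ N (i+1) (j-1)
      + (p12 * ((j:ℝ)+1)) • symA A₁ A₂ N (i-1) (j+1) := by
  ext x y
  rw [mul_symA_entry' htri B hB01 hBdiag q1 q2 p10 p11 p12 p20 p21 p22 hBcomb hBA₁ hBA₂
    i j L hL x y]
  simp only [Matrix.add_apply, Matrix.smul_apply, smul_eq_mul, symA, Matrix.of_apply]
  obtain ⟨Z1, hZ1⟩ : ∃ z : ℤ, ((univ.filter fun t => A₁ (x t) (y t) = 1).card : ℤ) = z :=
    ⟨_, rfl⟩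
  obtain ⟨Z2, hZ2⟩ : ∃ z : ℤ, ((univ.filter fun t => A₂ (x t) (y t) = 1).card : ℤ) = z :=
    ⟨_, rfl⟩
  rw [hZ1, hZ2]
  simp only [chi]
  simp only [show (Z1 = i + 1 ∧ Z2 = j) = (Z1 - 1 = i ∧ Z2 = j) from propext (by omega),
    show (Z1 = i ∧ Z2 = j + 1) = (Z1 = i ∧ Z2 - 1 = j) from propext (by omega),
    show (Z1 = i - 1 ∧ Z2 = j) = (Z1 + 1 = i ∧ Z2 = j) from propext (by omega),
    show (Z1 = i ∧ Z2 = j - 1) = (Z1 = i ∧ Z2 + 1 = j) from propext (by omega),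
    show (Z1 = i + 1 ∧ Z2 = j - 1) = (Z1 - 1 = i ∧ Z2 + 1 = j) from propext (by omega),
    show (Z1 = i - 1 ∧ Z2 = j + 1) = (Z1 + 1 = i ∧ Z2 - 1 = j) from propext (by omega)]
  split_ifs <;> (try casesm* _ ∧ _) <;> subst_vars <;>
    first
      | (exfalso; omega)
      | (push_cast; ring)

lemma symA_neg {A₁ A₂ : Matrix V V ℝ} (N : ℕ) {i j : ℤ} (h : i < 0 ∨ j < 0) :
    symA A₁ A₂ N i j = 0 := by
  ext x y
  simp only [symA, Matrix.of_apply, Matrix.zero_apply]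
  rw [if_neg]
  rintro ⟨h1, h2⟩
  rcases h with h | h <;> omega

lemma symA_transpose {A₁ A₂ : Matrix V V ℝ}
    (h₁symm : A₁ᵀ = A₁) (h₂symm : A₂ᵀ = A₂) (N : ℕ) (i j : ℤ) :
    (symA A₁ A₂ N i j)ᵀ = symA A₁ A₂ N i j := by
  have e1 : ∀ u v : V, A₁ v u = A₁ u v := fun u v => by
    conv_lhs => rw [← h₁symm, Matrix.transpose_apply]
  have e2 : ∀ u v : V, A₂ v u = A₂ u v := fun u v => by
    conv_lhs => rw [← h₂symm, Matrix.transpose_apply]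
  ext x y
  simp only [Matrix.transpose_apply, symA, Matrix.of_apply]
  have f1 : (univ.filter fun s => A₁ (y s) (x s) = 1)
      = (univ.filter fun s => A₁ (x s) (y s) = 1) :=
    Finset.filter_congr fun s _ => by rw [e1]
  have f2 : (univ.filter fun s => A₂ (y s) (x s) = 1)
      = (univ.filter fun s => A₂ (x s) (y s) = 1) :=
    Finset.filter_congr fun s _ => by rw [e2]
  rw [f1, f2]

lemma symA_zero_zero {A₁ A₂ : Matrix V V ℝ}
    (htri : ∀ u v : V, (u = v ∧ A₁ u v = 0 ∧ A₂ u v = 0) ∨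
      (u ≠ v ∧ A₁ u v = 1 ∧ A₂ u v = 0) ∨ (u ≠ v ∧ A₁ u v = 0 ∧ A₂ u v = 1))
    (N : ℕ) : symA A₁ A₂ N 0 0 = 1 := by
  ext x y
  simp only [symA, Matrix.of_apply, Matrix.one_apply]
  refine if_congr ?_ rfl rfl
  constructor
  · rintro ⟨h1, h2⟩
    have e1 : (univ.filter fun s => A₁ (x s) (y s) = 1) = ∅ :=
      Finset.card_eq_zero.mp (by exact_mod_cast h1)
    have e2 : (univ.filter fun s => A₂ (x s) (y s) = 1) = ∅ :=
      Finset.card_eq_zero.mp (by exact_mod_cast h2)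
    funext s
    have m1 : ¬ A₁ (x s) (y s) = 1 := fun h => by
      have : s ∈ (univ.filter fun s => A₁ (x s) (y s) = 1) :=
        Finset.mem_filter.mpr ⟨Finset.mem_univ s, h⟩
      rw [e1] at this; exact absurd this (Finset.notMem_empty s)
    have m2 : ¬ A₂ (x s) (y s) = 1 := fun h => by
      have : s ∈ (univ.filter fun s => A₂ (x s) (y s) = 1) :=
        Finset.mem_filter.mpr ⟨Finset.mem_univ s, h⟩
      rw [e2] at this; exact absurd this (Finset.notMem_empty s)
    rcases htri (x s) (y s) with ⟨he, _, _⟩ | ⟨_, hA, _⟩ | ⟨_, _, hA⟩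
    · exact he
    · exact absurd hA m1
    · exact absurd hA m2
  · rintro rfl
    have hd : ∀ u : V, A₁ u u = 0 ∧ A₂ u u = 0 := by
      intro u
      rcases htri u u with ⟨_, h1, h2⟩ | ⟨h, _⟩ | ⟨h, _⟩ <;>
        first | exact ⟨h1, h2⟩ | exact absurd rfl h
    constructor
    · have : (univ.filter fun s => A₁ (x s) (x s) = 1) = ∅ := by
        refine Finset.filter_eq_empty_iff.mpr fun s _ => ?_
        rw [(hd (x s)).1]; norm_num
      rw [this]; simp
    · have : (univ.filter fun s => A₂ (x s) (x s) = 1) = ∅ := by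
        refine Finset.filter_eq_empty_iff.mpr fun s _ => ?_
        rw [(hd (x s)).2]; norm_num
      rw [this]; simp

lemma symA_char₁ {A₁ A₂ : Matrix V V ℝ}
    (htri : ∀ u v : V, (u = v ∧ A₁ u v = 0 ∧ A₂ u v = 0) ∨
      (u ≠ v ∧ A₁ u v = 1 ∧ A₂ u v = 0) ∨ (u ≠ v ∧ A₁ u v = 0 ∧ A₂ u v = 1))
    (N : ℕ) (x z : Fin N → V) :
    symA A₁ A₂ N 1 0 x z =
      if ∃ s, A₁ (x s) (z s) = 1 ∧ ∀ t, t ≠ s → z t = x t then 1 else 0 := by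
  simp only [symA, Matrix.of_apply]
  refine if_congr ?_ rfl rfl
  constructor
  · rintro ⟨h1, h2⟩
    obtain ⟨s, hs⟩ := Finset.card_eq_one.mp
      ((by exact_mod_cast h1) : (univ.filter fun s => A₁ (x s) (z s) = 1).card = 1)
    have e2 : (univ.filter fun s => A₂ (x s) (z s) = 1) = ∅ :=
      Finset.card_eq_zero.mp (by exact_mod_cast h2)
    refine ⟨s, ?_, ?_⟩
    · have : s ∈ (univ.filter fun s => A₁ (x s) (z s) = 1) := by
        rw [hs]; exact Finset.mem_singleton_self s
      exact (Finset.mem_filter.mp this).2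
    · intro t ht
      have ht1 : ¬ A₁ (x t) (z t) = 1 := fun hA => by
        have : t ∈ (univ.filter fun s => A₁ (x s) (z s) = 1) :=
          Finset.mem_filter.mpr ⟨Finset.mem_univ t, hA⟩
        rw [hs] at this
        exact ht (Finset.mem_singleton.mp this)
      have ht2 : ¬ A₂ (x t) (z t) = 1 := fun hA => by
        have : t ∈ (univ.filter fun s => A₂ (x s) (z s) = 1) :=
          Finset.mem_filter.mpr ⟨Finset.mem_univ t, hA⟩
        rw [e2] at this; exact absurd this (Finset.notMem_empty t)
      rcases htri (x t) (z t) with ⟨he, _, _⟩ | ⟨_, hA, _⟩ | ⟨_, _, hA⟩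
      · exact he.symm
      · exact absurd hA ht1
      · exact absurd hA ht2
  · rintro ⟨s, hBs, hoth⟩
    have hdiag0 : ∀ t, t ≠ s → A₁ (x t) (z t) = 0 ∧ A₂ (x t) (z t) = 0 := by
      intro t ht
      rw [hoth t ht]
      rcases htri (x t) (x t) with ⟨_, hA, hB⟩ | ⟨hne, _⟩ | ⟨hne, _⟩
      · exact ⟨hA, hB⟩
      · exact absurd rfl hne
      · exact absurd rfl hne
    have hA₂s : A₂ (x s) (z s) = 0 := by
      rcases htri (x s) (z s) with ⟨_, hA, _⟩ | ⟨_, _, hB⟩ | ⟨_, hA, _⟩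
      · rw [hBs] at hA; norm_num at hA
      · exact hB
      · rw [hBs] at hA; norm_num at hA
    constructor
    · have : (univ.filter fun t => A₁ (x t) (z t) = 1) = {s} := by
        ext t
        simp only [Finset.mem_filter, Finset.mem_univ, true_and, Finset.mem_singleton]
        constructor
        · intro hA
          by_contra ht
          rw [(hdiag0 t ht).1] at hA; norm_num at hA
        · rintro rfl; exact hBs
      rw [this]; simp
    · have : (univ.filter fun t => A₂ (x t) (z t) = 1) = ∅ := by
        refine Finset.filter_eq_empty_iff.mpr fun t _ => ?_
        by_cases ht : t = s
        · subst ht; rw [hA₂s]; norm_num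
        · rw [(hdiag0 t ht).2]; norm_num
      rw [this]; simp

lemma symA_char₂ {A₁ A₂ : Matrix V V ℝ}
    (htri : ∀ u v : V, (u = v ∧ A₁ u v = 0 ∧ A₂ u v = 0) ∨
      (u ≠ v ∧ A₁ u v = 1 ∧ A₂ u v = 0) ∨ (u ≠ v ∧ A₁ u v = 0 ∧ A₂ u v = 1))
    (N : ℕ) (x z : Fin N → V) :
    symA A₁ A₂ N 0 1 x z =
      if ∃ s, A₂ (x s) (z s) = 1 ∧ ∀ t, t ≠ s → z t = x t then 1 else 0 := by
  simp only [symA, Matrix.of_apply]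
  refine if_congr ?_ rfl rfl
  constructor
  · rintro ⟨h1, h2⟩
    obtain ⟨s, hs⟩ := Finset.card_eq_one.mp
      ((by exact_mod_cast h2) : (univ.filter fun s => A₂ (x s) (z s) = 1).card = 1)
    have e1 : (univ.filter fun s => A₁ (x s) (z s) = 1) = ∅ :=
      Finset.card_eq_zero.mp (by exact_mod_cast h1)
    refine ⟨s, ?_, ?_⟩
    · have : s ∈ (univ.filter fun s => A₂ (x s) (z s) = 1) := by
        rw [hs]; exact Finset.mem_singleton_self s
      exact (Finset.mem_filter.mp this).2
    · intro t ht
      have ht2 : ¬ A₂ (x t) (z t) = 1 := fun hA => by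
        have : t ∈ (univ.filter fun s => A₂ (x s) (z s) = 1) :=
          Finset.mem_filter.mpr ⟨Finset.mem_univ t, hA⟩
        rw [hs] at this
        exact ht (Finset.mem_singleton.mp this)
      have ht1 : ¬ A₁ (x t) (z t) = 1 := fun hA => by
        have : t ∈ (univ.filter fun s => A₁ (x s) (z s) = 1) :=
          Finset.mem_filter.mpr ⟨Finset.mem_univ t, hA⟩
        rw [e1] at this; exact absurd this (Finset.notMem_empty t)
      rcases htri (x t) (z t) with ⟨he, _, _⟩ | ⟨_, hA, _⟩ | ⟨_, _, hA⟩
      · exact he.symm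
      · exact absurd hA ht1
      · exact absurd hA ht2
  · rintro ⟨s, hBs, hoth⟩
    have hdiag0 : ∀ t, t ≠ s → A₁ (x t) (z t) = 0 ∧ A₂ (x t) (z t) = 0 := by
      intro t ht
      rw [hoth t ht]
      rcases htri (x t) (x t) with ⟨_, hA, hB⟩ | ⟨hne, _⟩ | ⟨hne, _⟩
      · exact ⟨hA, hB⟩
      · exact absurd rfl hne
      · exact absurd rfl hne
    have hA₁s : A₁ (x s) (z s) = 0 := by
      rcases htri (x s) (z s) with ⟨_, _, hA⟩ | ⟨_, _, hB⟩ | ⟨_, hA, _⟩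
      · rw [hBs] at hA; norm_num at hA
      · rw [hBs] at hB; norm_num at hB
      · exact hA
    constructor
    · have : (univ.filter fun t => A₁ (x t) (z t) = 1) = ∅ := by
        refine Finset.filter_eq_empty_iff.mpr fun t _ => ?_
        by_cases ht : t = s
        · subst ht; rw [hA₁s]; norm_num
        · rw [(hdiag0 t ht).1]; norm_num
      rw [this]; simp
    · have : (univ.filter fun t => A₂ (x t) (z t) = 1) = {s} := by
        ext t
        simp only [Finset.mem_filter, Finset.mem_univ, true_and, Finset.mem_singleton]
        constructor
        · intro hA
          by_contra ht
          rw [(hdiag0 t ht).2] at hA; norm_num at hA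
        · rintro rfl; exact hBs
      rw [this]; simp

end Aux

set_option maxHeartbeats 4000000 in
/-- the symmetrization of a two-class association scheme (with k,b,c > 0)
is a bivariate P-polynomial association scheme of type (1/2,1/2) on the domain
D = {(i,j) : i+j ≤ N}. -/
theorem symmetrization_is_bivPPoly
    {V : Type*} [Fintype V] [DecidableEq V]
    (A₀ A₁ A₂ : Matrix V V ℝ)
    -- two-class symmetric association scheme axioms
    (h₁ne : A₁ ≠ 0) (h₂ne : A₂ ≠ 0)
    (h₁01 : ∀ x y, A₁ x y = 0 ∨ A₁ x y = 1) (h₂01 : ∀ x y, A₂ x y = 0 ∨ A₂ x y = 1)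
    (h0 : A₀ = 1) (hsum : A₀ + A₁ + A₂ = Matrix.of fun _ _ => (1 : ℝ))
    (h₁symm : A₁ᵀ = A₁) (h₂symm : A₂ᵀ = A₂)
    -- parameters k, b, c > 0 of the scheme
    (k b c : ℝ) (hk : 0 < k) (hb : 0 < b) (hc : 0 < c)
    (hA₁sq : A₁ * A₁ = k • A₀ + (k - 1 - b) • A₁ + c • A₂)
    (hA₁₂ : A₁ * A₂ = b • A₁ + (k - c) • A₂)
    (hA₂₁ : A₂ * A₁ = b • A₁ + (k - c) • A₂)
    (hA₂sq : A₂ * A₂ =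
      (b * k / c) • A₀ + (b * k / c - b) • A₁ + (b * k / c - 1 - k + c) • A₂)
    (N : ℕ) (hN : 1 ≤ N) :
    CompatSet (1/2) (1/2) {p : ℕ × ℕ | p.1 + p.2 ≤ N} ∧
    ∀ i j : ℕ, i + j ≤ N →
      ∃ v : MvPolynomial (Fin 2) ℝ, CompatPoly (1/2) (1/2) (i, j) v ∧
        symA A₁ A₂ N i j = evalMat v (symA A₁ A₂ N 1 0) (symA A₁ A₂ N 0 1) := by
  rw [h0] at hsum hA₁sq hA₂sq
  have htri : ∀ u v : V, (u = v ∧ A₁ u v = 0 ∧ A₂ u v = 0) ∨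
      (u ≠ v ∧ A₁ u v = 1 ∧ A₂ u v = 0) ∨ (u ≠ v ∧ A₁ u v = 0 ∧ A₂ u v = 1) := by
    intro u v
    have h := congrFun (congrFun hsum u) v
    simp only [Matrix.add_apply, Matrix.one_apply, Matrix.of_apply] at h
    rcases h₁01 u v with e1 | e1 <;> rcases h₂01 u v with e2 | e2 <;>
      by_cases huv : u = v <;> rw [e1, e2] at h <;>
      first
        | exact Or.inl ⟨huv, e1, e2⟩
        | exact Or.inr (Or.inl ⟨huv, e1, e2⟩)
        | exact Or.inr (Or.inr ⟨huv, e1, e2⟩)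
        | (rw [if_pos huv] at h; linarith)
        | (rw [if_neg huv] at h; linarith)
  have hdiag₁ : ∀ u : V, A₁ u u = 0 := by
    intro u; rcases htri u u with ⟨_, h, _⟩ | ⟨h, _⟩ | ⟨h, _⟩ <;>
      first | exact h | exact absurd rfl h
  have hdiag₂ : ∀ u : V, A₂ u u = 0 := by
    intro u; rcases htri u u with ⟨_, _, h⟩ | ⟨h, _⟩ | ⟨h, _⟩ <;>
      first | exact h | exact absurd rfl h
  have hcomb₁ : A₁ = (1:ℝ) • A₁ + (0:ℝ) • A₂ := by module
  have hcomb₂ : A₂ = (0:ℝ) • A₁ + (1:ℝ) • A₂ := by module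
  have hA₁₂' : A₁ * A₂ = (0:ℝ) • (1 : Matrix V V ℝ) + b • A₁ + (k-c) • A₂ := by
    rw [hA₁₂]; module
  have hA₂₁' : A₂ * A₁ = (0:ℝ) • (1 : Matrix V V ℝ) + b • A₁ + (k-c) • A₂ := by
    rw [hA₂₁]; module
  have hrecX := fun (i' j' : ℤ) => gen_recursion htri A₁ h₁01 hdiag₁
    1 0 k (k-1-b) c 0 b (k-c) hcomb₁ hA₁sq hA₁₂' i' j' (symA A₁ A₂ N 1 0)
    (symA_char₁ htri N)
  have hrecY := fun (i' j' : ℤ) => gen_recursion htri A₂ h₂01 hdiag₂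
    0 1 0 b (k-c) (b * k / c) (b * k / c - b) (b * k / c - 1 - k + c) hcomb₂ hA₂₁' hA₂sq
    i' j' (symA A₁ A₂ N 0 1) (symA_char₂ htri N)
  have habLE : ∀ (m n i j : ℕ), ((m:ℝ) + 1/2 * n ≤ i + 1/2 * j) →
      (1/2 * m + (n:ℝ) ≤ 1/2 * i + j) → abLE (1/2) (1/2) (m,n) (i,j) :=
    fun _ _ _ _ h1 h2 => ⟨h1, h2⟩
  have habLE' : ∀ (m n i j : ℕ), abLE (1/2) (1/2) (m,n) (i,j) →
      ((m:ℝ) + 1/2 * n ≤ i + 1/2 * j) ∧ (1/2 * m + (n:ℝ) ≤ 1/2 * i + j) :=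
    fun _ _ _ _ h => ⟨h.1, h.2⟩
  have main : ∀ d : ℕ, ∀ i0 j0 : ℕ, i0 + j0 ≤ d →
      ∃ v : MvPolynomial (Fin 2) ℝ, CompatPoly (1/2) (1/2) (i0, j0) v ∧
        symA A₁ A₂ N (i0:ℤ) (j0:ℤ)
          = evalMat v (symA A₁ A₂ N 1 0) (symA A₁ A₂ N 0 1) := by
    intro d
    induction d with
    | zero =>
      intro i0 j0 hij
      have h1 : i0 = 0 := by omega
      have h2 : j0 = 0 := by omega
      subst h1; subst h2
      have hm00 : mexp 0 0 = 0 := by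
        ext t; fin_cases t <;> simp [mexp]
      refine ⟨1, ⟨?_, ?_⟩, ?_⟩
      · show (1 : MvPolynomial (Fin 2) ℝ).coeff (mexp 0 0) ≠ 0
        rw [hm00, MvPolynomial.coeff_one]
        simp
      · intro m n hmn
        rw [MvPolynomial.coeff_one] at hmn
        have hz : (0 : Fin 2 →₀ ℕ) = mexp m n := by
          by_contra hne; rw [if_neg hne] at hmn; exact hmn rfl
        have hm : m = 0 := by
          have := congrArg (fun f : Fin 2 →₀ ℕ => f 0) hz
          simpa [mexp_apply0] using this.symm
        have hn : n = 0 := by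
          have := congrArg (fun f : Fin 2 →₀ ℕ => f 1) hz
          simpa [mexp_apply1] using this.symm
        subst hm; subst hn
        exact habLE 0 0 0 0 (by norm_num) (by norm_num)
      · show symA A₁ A₂ N ((0:ℕ):ℤ) ((0:ℕ):ℤ) = _
        simp only [Nat.cast_zero]
        rw [symA_zero_zero htri]
        rw [show (1 : MvPolynomial (Fin 2) ℝ) = MvPolynomial.monomial 0 1 from rfl,
          evalMat_monomial]
        simp
    | succ d ih =>
      intro i0 j0 hij
      by_cases hle : i0 + j0 ≤ d
      · exact ih i0 j0 hle
      have hij' : i0 + j0 = d + 1 := by omega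
      have W : ∀ im jm : ℤ, (0 ≤ im → 0 ≤ jm → im + jm ≤ (d:ℤ)) →
          ∃ w : MvPolynomial (Fin 2) ℝ,
            symA A₁ A₂ N im jm = evalMat w (symA A₁ A₂ N 1 0) (symA A₁ A₂ N 0 1) ∧
            ∀ a b' : ℕ, w.coeff (mexp a b') ≠ 0 →
              ((a:ℝ) + 1/2 * b' ≤ (im:ℝ) + 1/2 * (jm:ℝ)
                ∧ 1/2 * a + (b':ℝ) ≤ 1/2 * (im:ℝ) + (jm:ℝ)) := by
        intro im jm hcond
        by_cases him : 0 ≤ im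
        · by_cases hjm : 0 ≤ jm
          · obtain ⟨m', rfl⟩ := Int.eq_ofNat_of_zero_le him
            obtain ⟨n', rfl⟩ := Int.eq_ofNat_of_zero_le hjm
            obtain ⟨w, hwc, hwr⟩ := ih m' n' (by exact_mod_cast hcond him hjm)
            refine ⟨w, hwr, fun a b' hab => ?_⟩
            obtain ⟨b1, b2⟩ := habLE' a b' m' n' (hwc.2 a b' hab)
            constructor <;> push_cast <;> linarith
          · refine ⟨0, ?_, fun a b' hab => absurd (by simp) hab⟩
            rw [symA_neg N (Or.inr (by omega)), evalMat_zero]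
        · refine ⟨0, ?_, fun a b' hab => absurd (by simp) hab⟩
          rw [symA_neg N (Or.inl (by omega)), evalMat_zero]
      rcases Nat.eq_zero_or_pos j0 with hj | hj
      · -- X-case : j0 = 0
        subst hj
        have hi1 : 1 ≤ i0 := by omega
        obtain ⟨u, hucomp, hurep⟩ := ih (i0-1) 0 (by omega)
        rw [show (((i0-1 : ℕ)):ℤ) = (i0:ℤ)-1 by omega] at hurep
        simp only [Nat.cast_zero] at hurep ⊢
        have hine : (i0:ℝ) ≠ 0 := Nat.cast_ne_zero.mpr (by omega)
        have hrec := hrecX ((i0:ℤ)-1) (0:ℤ)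
        rw [show ((i0:ℤ)-1)+1 = (i0:ℤ) by ring] at hrec
        rw [show ((i0:ℤ)-1)-1 = (i0:ℤ)-2 by ring] at hrec
        rw [show ((0:ℤ)+1) = (1:ℤ) by ring] at hrec
        rw [show ((0:ℤ)-1) = (-1:ℤ) by ring] at hrec
        have hclean : symA A₁ A₂ N 1 0 * symA A₁ A₂ N ((i0:ℤ)-1) 0
            = (i0:ℝ) • symA A₁ A₂ N (i0:ℤ) 0
              + (k*((N:ℝ)-(i0:ℝ)+2)) • symA A₁ A₂ N ((i0:ℤ)-2) 0
              + ((k-1-b)*((i0:ℝ)-1)) • symA A₁ A₂ N ((i0:ℤ)-1) 0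
              + (b*(i0:ℝ)) • symA A₁ A₂ N (i0:ℤ) (-1)
              + c • symA A₁ A₂ N ((i0:ℤ)-2) 1 := by
          rw [hrec]; push_cast; module
        obtain ⟨w1, hw1, hw1s⟩ := W ((i0:ℤ)-2) 0 (fun _ _ => by omega)
        obtain ⟨w2, hw2, hw2s⟩ := W ((i0:ℤ)-1) 0 (fun _ _ => by omega)
        obtain ⟨w3, hw3, hw3s⟩ := W (i0:ℤ) (-1) (fun _ hh => by omega)
        obtain ⟨w4, hw4, hw4s⟩ := W ((i0:ℤ)-2) 1 (fun _ _ => by omega)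
        set vraw : MvPolynomial (Fin 2) ℝ := u * MvPolynomial.X 0
            - ((k*((N:ℝ)-(i0:ℝ)+2)) • w1
               + ((k-1-b)*((i0:ℝ)-1)) • w2
               + (b*(i0:ℝ)) • w3
               + c • w4) with hvdef
        have hvraw : evalMat vraw (symA A₁ A₂ N 1 0) (symA A₁ A₂ N 0 1)
            = (i0:ℝ) • symA A₁ A₂ N (i0:ℤ) 0 := by
          rw [hvdef, evalMat_sub, evalMat_mul_X0, evalMat_add, evalMat_add, evalMat_add,
            evalMat_smul, evalMat_smul, evalMat_smul, evalMat_smul,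
            ← hurep, ← hw1, ← hw2, ← hw3, ← hw4, hclean]
          module
        have hw1z : w1.coeff (mexp i0 0) = 0 := by
          by_contra hcon
          obtain ⟨b1, b2⟩ := hw1s i0 0 hcon
          push_cast at b1 b2; linarith
        have hw2z : w2.coeff (mexp i0 0) = 0 := by
          by_contra hcon
          obtain ⟨b1, b2⟩ := hw2s i0 0 hcon
          push_cast at b1 b2; linarith
        have hw3z : w3.coeff (mexp i0 0) = 0 := by
          by_contra hcon
          obtain ⟨b1, b2⟩ := hw3s i0 0 hcon
          push_cast at b1 b2; linarith
        have hw4z : w4.coeff (mexp i0 0) = 0 := by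
          by_contra hcon
          obtain ⟨b1, b2⟩ := hw4s i0 0 hcon
          push_cast at b1 b2; linarith
        have hlead : vraw.coeff (mexp i0 0) = u.coeff (mexp (i0-1) 0) := by
          rw [hvdef]
          simp only [MvPolynomial.coeff_sub, MvPolynomial.coeff_add, MvPolynomial.coeff_smul,
            smul_eq_mul, coeff_mul_X0, hw1z, hw2z, hw3z, hw4z]
          rw [if_neg (by omega : ¬ i0 = 0)]
          ring
        refine ⟨(i0:ℝ)⁻¹ • vraw, ⟨?_, ?_⟩, ?_⟩
        · show ((i0:ℝ)⁻¹ • vraw).coeff (mexp i0 0) ≠ 0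
          rw [MvPolynomial.coeff_smul, smul_eq_mul, hlead]
          exact mul_ne_zero (inv_ne_zero hine) hucomp.1
        · intro m n hmn
          have hne : vraw.coeff (mexp m n) ≠ 0 := by
            intro hz
            rw [MvPolynomial.coeff_smul, hz, smul_zero] at hmn
            exact hmn rfl
          rw [hvdef] at hne
          simp only [MvPolynomial.coeff_sub, MvPolynomial.coeff_add, MvPolynomial.coeff_smul,
            smul_eq_mul] at hne
          have key : (u * MvPolynomial.X 0).coeff (mexp m n) ≠ 0
              ∨ w1.coeff (mexp m n) ≠ 0 ∨ w2.coeff (mexp m n) ≠ 0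
              ∨ w3.coeff (mexp m n) ≠ 0 ∨ w4.coeff (mexp m n) ≠ 0 := by
            by_contra hall
            push_neg at hall
            obtain ⟨a1, a2, a3, a4, a5⟩ := hall
            exact hne (by rw [a1, a2, a3, a4, a5]; ring)
          rcases key with hcase | hcase | hcase | hcase | hcase
          · rw [coeff_mul_X0] at hcase
            by_cases hm : m = 0
            · rw [if_pos hm] at hcase; exact absurd rfl hcase
            · rw [if_neg hm] at hcase
              obtain ⟨b1, b2⟩ := habLE' (m-1) n (i0-1) 0 (hucomp.2 (m-1) n hcase)
              rw [Nat.cast_sub (by omega : 1 ≤ m), Nat.cast_sub (by omega : 1 ≤ i0)] at b1 b2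
              exact habLE m n i0 0 (by push_cast at b1 b2 ⊢; linarith)
                (by push_cast at b1 b2 ⊢; linarith)
          · obtain ⟨b1, b2⟩ := hw1s m n hcase
            push_cast at b1 b2
            exact habLE m n i0 0 (by push_cast; linarith) (by push_cast; linarith)
          · obtain ⟨b1, b2⟩ := hw2s m n hcase
            push_cast at b1 b2
            exact habLE m n i0 0 (by push_cast; linarith) (by push_cast; linarith)
          · obtain ⟨b1, b2⟩ := hw3s m n hcase
            push_cast at b1 b2
            exact habLE m n i0 0 (by push_cast; linarith) (by push_cast; linarith)
          · obtain ⟨b1, b2⟩ := hw4s m n hcase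
            push_cast at b1 b2
            exact habLE m n i0 0 (by push_cast; linarith) (by push_cast; linarith)
        · show symA A₁ A₂ N (i0:ℤ) 0 = _
          rw [evalMat_smul, hvraw, inv_smul_smul₀ hine]
      · -- Y-case : j0 ≥ 1
        obtain ⟨u, hucomp, hurep⟩ := ih i0 (j0-1) (by omega)
        rw [show (((j0-1 : ℕ)):ℤ) = (j0:ℤ)-1 by omega] at hurep
        have hjne : (j0:ℝ) ≠ 0 := Nat.cast_ne_zero.mpr (by omega)
        have hrec := hrecY (i0:ℤ) ((j0:ℤ)-1)
        rw [show ((j0:ℤ)-1)+1 = (j0:ℤ) by ring] at hrec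
        rw [show ((j0:ℤ)-1)-1 = (j0:ℤ)-2 by ring] at hrec
        have hclean : symA A₁ A₂ N 0 1 * symA A₁ A₂ N (i0:ℤ) ((j0:ℤ)-1)
            = (j0:ℝ) • symA A₁ A₂ N (i0:ℤ) (j0:ℤ)
              + (b*k/c*((N:ℝ)-(i0:ℝ)-(j0:ℝ)+2)) • symA A₁ A₂ N (i0:ℤ) ((j0:ℤ)-2)
              + (b*(i0:ℝ) + (b*k/c-1-k+c)*((j0:ℝ)-1)) • symA A₁ A₂ N (i0:ℤ) ((j0:ℤ)-1)
              + ((b*k/c-b)*((i0:ℝ)+1)) • symA A₁ A₂ N ((i0:ℤ)+1) ((j0:ℤ)-2)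
              + ((k-c)*(j0:ℝ)) • symA A₁ A₂ N ((i0:ℤ)-1) (j0:ℤ) := by
          rw [hrec]; push_cast; module
        obtain ⟨w1, hw1, hw1s⟩ := W (i0:ℤ) ((j0:ℤ)-2) (fun _ _ => by omega)
        obtain ⟨w2, hw2, hw2s⟩ := W (i0:ℤ) ((j0:ℤ)-1) (fun _ _ => by omega)
        obtain ⟨w3, hw3, hw3s⟩ := W ((i0:ℤ)+1) ((j0:ℤ)-2) (fun _ _ => by omega)
        obtain ⟨w4, hw4, hw4s⟩ := W ((i0:ℤ)-1) (j0:ℤ) (fun _ _ => by omega)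
        have hcomm : symA A₁ A₂ N (i0:ℤ) ((j0:ℤ)-1) * symA A₁ A₂ N 0 1
            = symA A₁ A₂ N 0 1 * symA A₁ A₂ N (i0:ℤ) ((j0:ℤ)-1) := by
          have h2 : (symA A₁ A₂ N 0 1 * symA A₁ A₂ N (i0:ℤ) ((j0:ℤ)-1))ᵀ
              = symA A₁ A₂ N 0 1 * symA A₁ A₂ N (i0:ℤ) ((j0:ℤ)-1) := by
            rw [hclean]
            simp only [Matrix.transpose_add, Matrix.transpose_smul,
              symA_transpose h₁symm h₂symm]
          calc symA A₁ A₂ N (i0:ℤ) ((j0:ℤ)-1) * symA A₁ A₂ N 0 1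
              = (symA A₁ A₂ N (i0:ℤ) ((j0:ℤ)-1))ᵀ * (symA A₁ A₂ N 0 1)ᵀ := by
                rw [symA_transpose h₁symm h₂symm, symA_transpose h₁symm h₂symm]
            _ = (symA A₁ A₂ N 0 1 * symA A₁ A₂ N (i0:ℤ) ((j0:ℤ)-1))ᵀ := by
                rw [Matrix.transpose_mul]
            _ = _ := h2
        set vraw : MvPolynomial (Fin 2) ℝ := u * MvPolynomial.X 1
            - ((b*k/c*((N:ℝ)-(i0:ℝ)-(j0:ℝ)+2)) • w1
               + (b*(i0:ℝ) + (b*k/c-1-k+c)*((j0:ℝ)-1)) • w2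
               + ((b*k/c-b)*((i0:ℝ)+1)) • w3
               + ((k-c)*(j0:ℝ)) • w4) with hvdef
        have hvraw : evalMat vraw (symA A₁ A₂ N 1 0) (symA A₁ A₂ N 0 1)
            = (j0:ℝ) • symA A₁ A₂ N (i0:ℤ) (j0:ℤ) := by
          rw [hvdef, evalMat_sub, evalMat_mul_X1, evalMat_add, evalMat_add, evalMat_add,
            evalMat_smul, evalMat_smul, evalMat_smul, evalMat_smul,
            ← hurep, ← hw1, ← hw2, ← hw3, ← hw4, hcomm, hclean]
          module
        have hw1z : w1.coeff (mexp i0 j0) = 0 := by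
          by_contra hcon
          obtain ⟨b1, b2⟩ := hw1s i0 j0 hcon
          push_cast at b1 b2; linarith
        have hw2z : w2.coeff (mexp i0 j0) = 0 := by
          by_contra hcon
          obtain ⟨b1, b2⟩ := hw2s i0 j0 hcon
          push_cast at b1 b2; linarith
        have hw3z : w3.coeff (mexp i0 j0) = 0 := by
          by_contra hcon
          obtain ⟨b1, b2⟩ := hw3s i0 j0 hcon
          push_cast at b1 b2; linarith
        have hw4z : w4.coeff (mexp i0 j0) = 0 := by
          by_contra hcon
          obtain ⟨b1, b2⟩ := hw4s i0 j0 hcon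
          push_cast at b1 b2; linarith
        have hlead : vraw.coeff (mexp i0 j0) = u.coeff (mexp i0 (j0-1)) := by
          rw [hvdef]
          simp only [MvPolynomial.coeff_sub, MvPolynomial.coeff_add, MvPolynomial.coeff_smul,
            smul_eq_mul, coeff_mul_X1, hw1z, hw2z, hw3z, hw4z]
          rw [if_neg (by omega : ¬ j0 = 0)]
          ring
        refine ⟨(j0:ℝ)⁻¹ • vraw, ⟨?_, ?_⟩, ?_⟩
        · show ((j0:ℝ)⁻¹ • vraw).coeff (mexp i0 j0) ≠ 0
          rw [MvPolynomial.coeff_smul, smul_eq_mul, hlead]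
          exact mul_ne_zero (inv_ne_zero hjne) hucomp.1
        · intro m n hmn
          have hne : vraw.coeff (mexp m n) ≠ 0 := by
            intro hz
            rw [MvPolynomial.coeff_smul, hz, smul_zero] at hmn
            exact hmn rfl
          rw [hvdef] at hne
          simp only [MvPolynomial.coeff_sub, MvPolynomial.coeff_add, MvPolynomial.coeff_smul,
            smul_eq_mul] at hne
          have key : (u * MvPolynomial.X 1).coeff (mexp m n) ≠ 0
              ∨ w1.coeff (mexp m n) ≠ 0 ∨ w2.coeff (mexp m n) ≠ 0
              ∨ w3.coeff (mexp m n) ≠ 0 ∨ w4.coeff (mexp m n) ≠ 0 := by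
            by_contra hall
            push_neg at hall
            obtain ⟨a1, a2, a3, a4, a5⟩ := hall
            exact hne (by rw [a1, a2, a3, a4, a5]; ring)
          rcases key with hcase | hcase | hcase | hcase | hcase
          · rw [coeff_mul_X1] at hcase
            by_cases hn : n = 0
            · rw [if_pos hn] at hcase; exact absurd rfl hcase
            · rw [if_neg hn] at hcase
              obtain ⟨b1, b2⟩ := habLE' m (n-1) i0 (j0-1) (hucomp.2 m (n-1) hcase)
              rw [Nat.cast_sub (by omega : 1 ≤ n), Nat.cast_sub (by omega : 1 ≤ j0)] at b1 b2
              exact habLE m n i0 j0 (by push_cast at b1 b2 ⊢; linarith)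
                (by push_cast at b1 b2 ⊢; linarith)
          · obtain ⟨b1, b2⟩ := hw1s m n hcase
            push_cast at b1 b2
            exact habLE m n i0 j0 (by push_cast; linarith) (by push_cast; linarith)
          · obtain ⟨b1, b2⟩ := hw2s m n hcase
            push_cast at b1 b2
            exact habLE m n i0 j0 (by push_cast; linarith) (by push_cast; linarith)
          · obtain ⟨b1, b2⟩ := hw3s m n hcase
            push_cast at b1 b2
            exact habLE m n i0 j0 (by push_cast; linarith) (by push_cast; linarith)
          · obtain ⟨b1, b2⟩ := hw4s m n hcase
            push_cast at b1 b2
            exact habLE m n i0 j0 (by push_cast; linarith) (by push_cast; linarith)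
        · show symA A₁ A₂ N (i0:ℤ) (j0:ℤ) = _
          rw [evalMat_smul, hvraw, inv_smul_smul₀ hjne]
  refine ⟨?_, ?_⟩
  · intro p q hq hle
    simp only [Set.mem_setOf_eq] at hq ⊢
    obtain ⟨ha, hb⟩ := hle
    have hr : (p.1:ℝ) + p.2 ≤ (q.1:ℝ) + q.2 := by linarith
    have h3 : p.1 + p.2 ≤ q.1 + q.2 := by exact_mod_cast hr
    omega
  · intro i j hij
    exact main (i+j) i j le_rfl
end
end
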